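/- Let ≻₁ and ≻₂ be two strict linear orders on a finite set A of m alternatives, and for i ∈ {1,2} and a ∈ A let rkᵢ(a) = |{b ∈ A : b ≻ᵢ a}| denote the number of alternatives that voter i strictly prefers to a. Define the embedding E by E(v₁) = (−m², 0), E(v₂) = (0, −m²), and E(a) = (rk₁(a), rk₂(a)) for every alternative a. Then E is a 2-dimensional Euclidean embedding of the two-voter profile (≻₁, ≻₂): for each i ∈ {1,2} and all distinct alternatives a, b, one has a ≻ᵢ b if and only if ‖E(a) − E(vᵢ)‖ < ‖E(b) − E(vᵢ)‖, where ‖·‖ denotes the Euclidean distance in ℝ². -/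

import Mathlib

/-!
All alternatives lie in the grid `[0, m)²`, and voter `1` sits at distance `m²` to its left.
Increasing the first coordinate by at least one raises the squared distance to voter `1` by more
than `m²`, which exceeds anything the second coordinate (below `m`) can contribute; so the distance
to voter `1` is ordered by the first rank alone, and symmetrically for voter `2`.
-/

noncomputable def pt (x y : ℝ) : EuclideanSpace ℝ (Fin 2) :=
  (WithLp.equiv 2 (Fin 2 → ℝ)).symm ![x, y]

section Rank

variable {A : Type*} (r : A → A → Prop)

noncomputable def rank (a : A) : ℕ := Nat.card {b : A // r b a}

theorem rank_lt_rank_of_rel [Finite A] [IsStrictOrder A r] {a b : A} (h : r a b) :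
    rank r a < rank r b := by
  simp only [rank]
  refine Set.ncard_lt_ncard ⟨fun c hc => _root_.trans hc h, fun hsub => ?_⟩ (Set.toFinite _)
  exact irrefl_of r a (hsub h)

theorem rank_lt_card [Finite A] [Std.Irrefl r] (a : A) : rank r a < Nat.card A :=
  Finite.card_subtype_lt (irrefl_of r a)

theorem rel_iff_lt_of_rel_imp_lt [IsStrictTotalOrder A r] {β : Type*} [Preorder β] {g : A → β}
    (hg : ∀ a b, r a b → g a < g b) {a b : A} (hab : a ≠ b) : r a b ↔ g a < g b := by
  refine ⟨hg a b, fun hlt => ?_⟩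
  rcases trichotomous_of r a b with h | h | h
  · exact h
  · exact absurd h hab
  · exact absurd hlt (hg b a h).asymm

end Rank

theorem dist_pt (x y u v : ℝ) :
    dist (pt x y) (pt u v) = √((x - u) ^ 2 + (y - v) ^ 2) := by
  simp [pt, EuclideanSpace.dist_eq, Fin.sum_univ_two, Real.dist_eq, sq_abs]

theorem dist_pt_swap (x y u v : ℝ) : dist (pt x y) (pt u v) = dist (pt y x) (pt v u) := by
  rw [dist_pt, dist_pt, add_comm]

theorem dist_pt_lt_dist_pt_of_add_one_le {m x y x' y' : ℝ} (hx : 0 ≤ x) (hxx' : x + 1 ≤ x')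
    (hy : 0 ≤ y) (hym : y < m) :
    dist (pt x y) (pt (-m ^ 2) 0) < dist (pt x' y') (pt (-m ^ 2) 0) := by
  rw [dist_pt, dist_pt]
  apply Real.sqrt_lt_sqrt (by positivity)
  have hx' : x + m ^ 2 + 1 ≤ x' + m ^ 2 := by linarith
  have hy2 : y ^ 2 < m ^ 2 := by nlinarith
  nlinarith [sq_nonneg y', sq_nonneg (x + m ^ 2 + 1)]

theorem rank_embedding_is_euclidean
    {A : Type*} [Fintype A]
    (pref : Fin 2 → A → A → Prop)
    (hpref : ∀ i, IsStrictTotalOrder A (pref i))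
    (m : ℕ) (hm : Fintype.card A = m)
    (rk : Fin 2 → A → ℕ)
    (hrk : ∀ i a, rk i a = Nat.card {b : A // pref i b a})
    (EV : Fin 2 → EuclideanSpace ℝ (Fin 2))
    (hEV0 : EV 0 = pt (-(m : ℝ) ^ 2) 0)
    (hEV1 : EV 1 = pt 0 (-(m : ℝ) ^ 2))
    (EA : A → EuclideanSpace ℝ (Fin 2))
    (hEA : ∀ a, EA a = pt (rk 0 a) (rk 1 a)) :
    ∀ (i : Fin 2) (a b : A), a ≠ b →
      (pref i a b ↔ dist (EA a) (EV i) < dist (EA b) (EV i)) := by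
  intro i a b hab
  have hrk_lt : ∀ j c, (rk j c : ℝ) < m := fun j c => by
    rw [hrk, ← hm, ← Nat.card_eq_fintype_card]
    exact_mod_cast rank_lt_card (pref j) c
  have hrk_succ_le : ∀ j c d, pref j c d → (rk j c : ℝ) + 1 ≤ rk j d := fun j c d h => by
    rw [hrk, hrk]
    exact_mod_cast rank_lt_rank_of_rel (pref j) h
  refine rel_iff_lt_of_rel_imp_lt (pref i) (g := fun c => dist (EA c) (EV i)) (fun c d h => ?_) hab
  obtain rfl | rfl : i = 0 ∨ i = 1 := by omega
  · rw [hEV0, hEA, hEA]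
    exact dist_pt_lt_dist_pt_of_add_one_le (by positivity) (hrk_succ_le 0 c d h)
      (by positivity) (hrk_lt 1 c)
  · rw [hEV1, hEA, hEA, dist_pt_swap, dist_pt_swap (rk 0 d)]
    exact dist_pt_lt_dist_pt_of_add_one_le (by positivity) (hrk_succ_le 1 c d h)
      (by positivity) (hrk_lt 0 c)
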